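/- arXiv:1112.3047 — 2 statements merged into one kernel-verified Lean document; each statement's English description precedes it below -/
import Mathlib

section
/- The anti-involution 𝑇ε̃ maps every Grassmann basis monomial m = e_{i1}···e_{ik} (i1 < ··· < ik) of Cl_{p,q} to its inverse: 𝑇ε̃(m) = m^{-1}. -/
/-- The signature `(p,q)` sequence: `ε_i = 1` for `i < p` and `ε_i = -1` otherwise. -/
def sig (p q : ℕ) : Fin (p + q) → ℝ := fun i => if (i : ℕ) < p then 1 else -1

/-- The quadratic form `x_1² + ⋯ + x_p² − x_{p+1}² − ⋯ − x_{p+q}²` on `ℝ^{p+q}`. -/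
noncomputable def sigQ (p q : ℕ) : QuadraticForm ℝ (Fin (p + q) → ℝ) :=
  QuadraticMap.weightedSumSquares ℝ (sig p q)

/-- The Grassmann basis monomial `e_I = e_{i₁} ⋯ e_{i_k}` (indices in increasing order)
in `Cl_{p,q}`. -/
noncomputable def basisMonomial (p q : ℕ) (I : Finset (Fin (p + q))) :
    CliffordAlgebra (sigQ p q) :=
  ((I.sort (· ≤ ·)).map fun i =>
    CliffordAlgebra.ι (sigQ p q) (Pi.single i 1 : Fin (p + q) → ℝ)).prod

/-!
Each generator `e_i` squares to `Q(e_i) = ±1`, so `t_ε(e_i) = Q(e_i) e_i` is its inverse. The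
reversion `β` reverses a product of generators, and `T_ε` then replaces every factor by its
inverse, which is exactly the inverse of the product.
-/

theorem List.prod_map_inv_reverse_mul_prod {M ι : Type*} [Monoid M] {a b : ι → M}
    (hba : ∀ i, b i * a i = 1) (hab : ∀ i, a i * b i = 1) (l : List ι) :
    (l.map b).reverse.prod * (l.map a).prod = 1 ∧
      (l.map a).prod * (l.map b).reverse.prod = 1 := by
  let u : ι → Mˣ := fun i => ⟨a i, b i, hab i, hba i⟩
  have hprod : (l.map a).prod = ((l.map u).prod : M) := by
    rw [← Units.coeHom_apply, map_list_prod, List.map_map]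
    rfl
  have hinv : (l.map b).reverse.prod = ((l.map u).prod⁻¹ : Mˣ) := by
    rw [List.prod_inv_reverse, ← Units.coeHom_apply, map_list_prod, List.map_reverse,
      List.map_map, List.map_map]
    rfl
  rw [hprod, hinv]
  exact ⟨Units.inv_mul _, Units.mul_inv _⟩

namespace CliffordAlgebra

variable {R M : Type*} [CommRing R] [AddCommGroup M] [Module R M] (Q : QuadraticForm R M)

theorem ι_smul_self_mul_ι (v : M) : ι Q (Q v • v) * ι Q v = algebraMap R _ (Q v * Q v) := by
  rw [map_smul, smul_mul_assoc, ι_sq_scalar, Algebra.smul_def, ← map_mul]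

theorem ι_mul_ι_smul_self (v : M) : ι Q v * ι Q (Q v • v) = algebraMap R _ (Q v * Q v) := by
  rw [map_smul, mul_smul_comm, ι_sq_scalar, Algebra.smul_def, ← map_mul]

end CliffordAlgebra

theorem sigQ_single (p q : ℕ) (i : Fin (p + q)) : sigQ p q (Pi.single i 1) = sig p q i := by
  simp [sigQ, QuadraticMap.weightedSumSquares_apply, Pi.single_apply]

theorem sig_mul_self (p q : ℕ) (i : Fin (p + q)) : sig p q i * sig p q i = 1 := by
  unfold sig
  split_ifs <;> norm_num

theorem basisMonomial_eq_prod_map_ι (p q : ℕ) (I : Finset (Fin (p + q))) :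
    basisMonomial p q I = (((I.sort (· ≤ ·)).map fun i =>
      (Pi.single i 1 : Fin (p + q) → ℝ)).map (CliffordAlgebra.ι (sigQ p q))).prod := by
  rw [basisMonomial, List.map_map]
  rfl

/-- the transposition anti-involution `𝑇ε̃ = T_ε ∘ β` maps every Grassmann
basis monomial `m = e_{i₁}⋯e_{i_k}` of `Cl_{p,q}` to its inverse: `𝑇ε̃(m) = m⁻¹`. -/
theorem stmt8 (p q : ℕ) (t : (Fin (p + q) → ℝ) →ₗ[ℝ] (Fin (p + q) → ℝ))
    (ht : ∀ i, t ((Pi.single i 1 : Fin (p + q) → ℝ))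
      = sig p q i • (Pi.single i 1 : Fin (p + q) → ℝ))
    (F : CliffordAlgebra (sigQ p q) →ₐ[ℝ] CliffordAlgebra (sigQ p q))
    (hF : ∀ x, F (CliffordAlgebra.ι (sigQ p q) x) = CliffordAlgebra.ι (sigQ p q) (t x)) :
    ∀ I : Finset (Fin (p + q)),
      F (CliffordAlgebra.reverse (basisMonomial p q I)) * basisMonomial p q I = 1 ∧
      basisMonomial p q I * F (CliffordAlgebra.reverse (basisMonomial p q I)) = 1 := by
  intro I
  let e : Fin (p + q) → CliffordAlgebra (sigQ p q) :=
    fun i => CliffordAlgebra.ι (sigQ p q) (Pi.single i 1)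
  have hFe : ∀ i,
      F (e i) = CliffordAlgebra.ι (sigQ p q) (sigQ p q (Pi.single i 1) • Pi.single i 1) :=
    fun i => by rw [hF, ht, sigQ_single]
  have hinv_left : ∀ i, F (e i) * e i = 1 := fun i => by
    rw [hFe, CliffordAlgebra.ι_smul_self_mul_ι, sigQ_single, sig_mul_self, map_one]
  have hinv_right : ∀ i, e i * F (e i) = 1 := fun i => by
    rw [hFe, CliffordAlgebra.ι_mul_ι_smul_self, sigQ_single, sig_mul_self, map_one]
  have hrev : F (CliffordAlgebra.reverse (basisMonomial p q I)) =
      (((I.sort (· ≤ ·)).map fun i => F (e i))).reverse.prod := by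
    rw [basisMonomial_eq_prod_map_ι, CliffordAlgebra.reverse_prod_map_ι, map_list_prod,
      List.map_reverse, List.map_map, List.map_map]
    rfl
  rw [hrev]
  exact List.prod_map_inv_reverse_mul_prod hinv_left hinv_right _
end

section
/- The stabilizer of the idempotent group under conjugation equals the centralizer: G_{p,q}(f) = C_{G_{p,q}}(T_{p,q}(f)), i.e., a monomial m ∈ G_{p,q} stabilizes f = (1/2^k)∏(1 + e_{I_j}) under conjugation if and only if m commutes with each generator e_{I_j} of T_{p,q}(f). -/
/-!
Conjugation by `g` is an algebra automorphism `σ`, so if `σ` fixes every `e_{I_j}` it fixes `f`.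
Conversely `f e_{I_j} = f`, since `(1 + e) e = 1 + e` when `e² = 1` and the factors commute; so
`σ f = f` together with `σ e_{I_j} = -e_{I_j}` gives `f = σ (f e_{I_j}) = -f`, i.e. `f = 0`.
This is impossible: expanded in the commutative subalgebra generated by the `e_{I_j}`, `f` is
`2⁻ᵏ` times the sum of all subset products, which are linearly independent.
-/

open scoped IsMulCommutative

theorem Finset.prod_map_sort {ι M : Type*} [CommMonoid M] (r : ι → ι → Prop) [DecidableRel r]
    [IsTrans ι r] [Std.Antisymm r] [Std.Total r] (s : Finset ι) (f : ι → M) :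
    ((s.sort r).map f).prod = ∏ i ∈ s, f i := by
  rw [Finset.prod_eq_multiset_prod, ← Finset.sort_eq s r, Multiset.map_coe, Multiset.prod_coe]

section CommSemiring

variable {K R ι : Type*} [CommSemiring K] [CommSemiring R] [Algebra K R] [Fintype ι]

theorem Finset.prod_smul_one_add_eq_sum_powerset (c : K) (x : ι → R) :
    ∏ i, c • (1 + x i) = c ^ Fintype.card ι • ∑ S : Finset ι, ∏ i ∈ S, x i := by
  rw [← Finset.smul_prod, Finset.prod_one_add, Finset.powerset_univ, Finset.card_univ]

theorem Finset.prod_smul_one_add_mul_of_mul_self_eq_one (c : K) {x : ι → R} {j : ι}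
    (hj : x j * x j = 1) : (∏ i, c • (1 + x i)) * x j = ∏ i, c • (1 + x i) := by
  classical
  rw [← Finset.mul_prod_erase _ _ (Finset.mem_univ j), mul_right_comm, smul_mul_assoc, add_mul,
    one_mul, hj, add_comm]

end CommSemiring

section CommutingFamily

variable {K A : Type*} [CommRing K] [Ring A] [Algebra K A] {k : ℕ}

theorem exists_isMulCommutative_subalgebra_of_commute {m : Fin k → A}
    (hm : ∀ i j, m i * m j = m j * m i) :
    ∃ (B : Subalgebra K A) (_ : IsMulCommutative B) (x : Fin k → B), (fun j => (x j : A)) = m :=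
  ⟨Algebra.adjoin K (Set.range m),
    Algebra.isMulCommutative_adjoin K (by rintro _ ⟨i, rfl⟩ _ ⟨j, rfl⟩; exact hm i j),
    fun j => ⟨m j, Algebra.subset_adjoin ⟨j, rfl⟩⟩, rfl⟩

theorem Subalgebra.coe_list_prod_ofFn_smul_one_add (B : Subalgebra K A) [IsMulCommutative B]
    (c : K) (x : Fin k → B) :
    (List.ofFn fun j => c • (1 + (x j : A))).prod = ((∏ j, c • (1 + x j) : B) : A) := by
  rw [← List.prod_ofFn, ← B.val_apply, map_list_prod, List.map_ofFn]
  rfl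

theorem list_prod_ofFn_smul_one_add_eq_sum {m : Fin k → A} (hm : ∀ i j, m i * m j = m j * m i)
    (c : K) :
    (List.ofFn fun j => c • (1 + m j)).prod
      = c ^ k • ∑ S : Finset (Fin k), ((S.sort (· ≤ ·)).map m).prod := by
  obtain ⟨B, _, x, rfl⟩ := exists_isMulCommutative_subalgebra_of_commute (K := K) hm
  have hsort (S : Finset (Fin k)) :
      ((S.sort (· ≤ ·)).map fun j => (x j : A)).prod = ((∏ j ∈ S, x j : B) : A) := by
    rw [← Finset.prod_map_sort (· ≤ ·), ← B.val_apply, map_list_prod, List.map_map]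
    rfl
  simp only [B.coe_list_prod_ofFn_smul_one_add, Finset.prod_smul_one_add_eq_sum_powerset,
    Fintype.card_fin, hsort, Subalgebra.coe_smul, AddSubmonoidClass.coe_finsetSum]

theorem list_prod_ofFn_smul_one_add_mul_of_mul_self_eq_one {m : Fin k → A}
    (hm : ∀ i j, m i * m j = m j * m i) (c : K) {j : Fin k} (hj : m j * m j = 1) :
    (List.ofFn fun i => c • (1 + m i)).prod * m j = (List.ofFn fun i => c • (1 + m i)).prod := by
  obtain ⟨B, _, x, rfl⟩ := exists_isMulCommutative_subalgebra_of_commute (K := K) hm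
  rw [B.coe_list_prod_ofFn_smul_one_add, ← Subalgebra.coe_mul,
    Finset.prod_smul_one_add_mul_of_mul_self_eq_one c (Subtype.ext hj)]

theorem list_prod_ofFn_smul_one_add_ne_zero [NoZeroDivisors K] {m : Fin k → A}
    (hm : ∀ i j, m i * m j = m j * m i)
    (hli : LinearIndependent K fun S : Finset (Fin k) => ((S.sort (· ≤ ·)).map m).prod)
    {c : K} (hc : c ≠ 0) : (List.ofFn fun j => c • (1 + m j)).prod ≠ 0 := by
  rw [list_prod_ofFn_smul_one_add_eq_sum hm, Finset.smul_sum]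
  exact fun h => pow_ne_zero k hc (Fintype.linearIndependent_iff.mp hli _ h ∅)

end CommutingFamily

theorem eq_zero_of_mul_eq_self_of_map_eq_neg {K A F : Type*} [Field K] [NeZero (2 : K)] [Ring A]
    [Module K A] [FunLike F A A] [MonoidHomClass F A A] (σ : F) {e x : A} (he : σ e = e)
    (hex : e * x = e) (hx : σ x = -x) : e = 0 := by
  have h : e = -e := calc
    e = σ (e * x) := by rw [hex, he]
    _ = -e := by rw [map_mul, he, hx, mul_neg, hex]
  have h2 : (2 : K) • e = 0 := by rw [two_smul]; nth_rewrite 1 [h]; exact neg_add_cancel e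
  exact (smul_eq_zero.mp h2).resolve_left two_ne_zero

/-- let `e_{I₁}, …, e_{I_k}` be commuting monomials of `Cl_{p,q}`, each
squaring to `1`, whose subset-products are linearly independent, and let
`f = ∏ⱼ (1 + e_{Iⱼ})/2`.  A vee-group monomial `g` (with inverse `g'`, conjugating each
`e_{Iⱼ}` to `±e_{Iⱼ}`) stabilizes `f` under conjugation iff it commutes with every
generator `e_{Iⱼ}` of the idempotent group `T_{p,q}(f)`. -/
theorem stmt18 (p q k : ℕ) (m : Fin k → CliffordAlgebra (sigQ p q))
    (hmc : ∀ j j', m j * m j' = m j' * m j)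
    (hm2 : ∀ j, m j * m j = 1)
    (hli : LinearIndependent ℝ fun S : Finset (Fin k) => ((S.sort (· ≤ ·)).map m).prod)
    (f : CliffordAlgebra (sigQ p q))
    (hfdef : f = (List.ofFn fun j : Fin k => (2 : ℝ)⁻¹ • (1 + m j)).prod)
    (g g' : CliffordAlgebra (sigQ p q)) (hgu : g * g' = 1) (hgu' : g' * g = 1)
    (hsign : ∀ j, g * m j * g' = m j ∨ g * m j * g' = -(m j)) :
    g * f * g' = f ↔ ∀ j, g * m j * g' = m j := by
  let σ := MulSemiringAction.toAlgEquiv ℝ (CliffordAlgebra (sigQ p q))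
    (ConjAct.toConjAct (⟨g, g', hgu, hgu'⟩ : _ˣ))
  change σ f = f ↔ ∀ j, σ (m j) = m j
  have hf0 : f ≠ 0 := by
    rw [hfdef]; exact list_prod_ofFn_smul_one_add_ne_zero hmc hli (inv_ne_zero two_ne_zero)
  have hfm (j : Fin k) : f * m j = f := by
    rw [hfdef]; exact list_prod_ofFn_smul_one_add_mul_of_mul_self_eq_one hmc _ (hm2 j)
  constructor
  · intro hf j
    exact (hsign j).resolve_right fun hneg =>
      hf0 (eq_zero_of_mul_eq_self_of_map_eq_neg (K := ℝ) σ hf (hfm j) hneg)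
  · intro hσ
    rw [hfdef, map_list_prod, List.map_ofFn]
    congr 2 with j
    simp only [Function.comp_apply, map_smul, map_add, map_one, hσ j]
end
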